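/- Let G be a graph, and construct the bipartite graph G' with vertex set {r} ∪ {v' : v ∈ V(G)} ∪ V(G) and edges {rv : v ∈ V(G)} ∪ {v'u : u ∈ N_G[v]}. Let X = {r} ∪ {v' : v ∈ V(G)}. Then G has a dominating set of size at most k if and only if there exists S ⊆ V(G') \ X with |S| ≤ k such that G'[S ∪ X] is connected. -/

import Mathlib

/-!
Every admissible `S` consists of original vertices, so `S` is the copy in `G'` of a set
`D ⊆ V(G)` with `|S| = |D|`. In `G'[S ∪ X]` the root is adjacent to all of `S`, and the only
neighbours of a terminal `v'` are the vertices of `N_G[v]`; so the graph is connected iff every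
`v'` has a neighbour in `S`, i.e. iff `D` meets every closed neighbourhood.
-/

open SimpleGraph

/-- The graph `G'` built from `G`: vertices are a root `r`, a copy `v'` of each vertex
`v` of `G`, and the vertices of `G`; the root is adjacent to every original vertex,
and the copy `v'` is adjacent to the closed neighborhood of `v` among originals. -/
def steinerAux {V : Type*} (G : SimpleGraph V) : SimpleGraph (Unit ⊕ V ⊕ V) :=
  SimpleGraph.fromRel fun a b =>
    match a, b with
    | Sum.inl _, Sum.inr (Sum.inr _) => True
    | Sum.inr (Sum.inl v), Sum.inr (Sum.inr u) => u = v ∨ G.Adj v u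
    | _, _ => False

/-- The terminal set `X = {r} ∪ {v' : v ∈ V(G)}`. -/
def steinerTerminals (V : Type*) : Set (Unit ⊕ V ⊕ V) :=
  Set.range Sum.inl ∪ Set.range (fun v : V => Sum.inr (Sum.inl v))

def SimpleGraph.IsDominatingSet {V : Type*} (G : SimpleGraph V) (D : Set V) : Prop :=
  ∀ v, v ∈ D ∨ ∃ u ∈ D, G.Adj u v

section Steiner

variable {V : Type*} (G : SimpleGraph V)

abbrev steinerOrig (v : V) : Unit ⊕ V ⊕ V := Sum.inr (Sum.inr v)

lemma steinerOrig_injective : Function.Injective (steinerOrig (V := V)) :=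
  Sum.inr_injective.comp Sum.inr_injective

lemma steinerAux_adj_root_orig (v : V) : (steinerAux G).Adj (Sum.inl ()) (steinerOrig v) := by
  simp [steinerAux, fromRel_adj]

lemma steinerAux_adj_copy_iff {v : V} {b : Unit ⊕ V ⊕ V} :
    (steinerAux G).Adj (Sum.inr (Sum.inl v)) b ↔
      ∃ u, b = steinerOrig u ∧ (u = v ∨ G.Adj v u) := by
  rcases b with _ | _ | u <;> simp [steinerAux, fromRel_adj]

lemma root_mem_steinerTerminals : (Sum.inl () : Unit ⊕ V ⊕ V) ∈ steinerTerminals V :=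
  Or.inl ⟨(), rfl⟩

lemma copy_mem_steinerTerminals (v : V) :
    (Sum.inr (Sum.inl v) : Unit ⊕ V ⊕ V) ∈ steinerTerminals V :=
  Or.inr ⟨v, rfl⟩

lemma steinerOrig_notMem_steinerTerminals (v : V) : steinerOrig v ∉ steinerTerminals V := by
  rintro (⟨_, h⟩ | ⟨_, h⟩) <;> simp at h

lemma disjoint_steinerTerminals_iff {S : Set (Unit ⊕ V ⊕ V)} :
    Disjoint S (steinerTerminals V) ↔ S ⊆ Set.range steinerOrig := by
  constructor
  · intro h x hx
    rcases x with _ | v | v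
    · exact absurd root_mem_steinerTerminals (h.notMem_of_mem_left hx)
    · exact absurd (copy_mem_steinerTerminals v) (h.notMem_of_mem_left hx)
    · exact ⟨v, rfl⟩
  · rintro h
    exact Set.disjoint_left.2 fun x hx ↦ by
      obtain ⟨v, rfl⟩ := h hx
      exact steinerOrig_notMem_steinerTerminals v

lemma steinerAux_induce_connected_of_isDominatingSet {D : Set V} (hD : G.IsDominatingSet D) :
    ((steinerAux G).induce (steinerOrig '' D ∪ steinerTerminals V)).Connected := by
  set H := (steinerAux G).induce (steinerOrig '' D ∪ steinerTerminals V)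
  have orig_mem {u : V} (hu : u ∈ D) : steinerOrig u ∈ steinerOrig '' D ∪ steinerTerminals V :=
    Or.inl ⟨u, hu, rfl⟩
  let root : ↑(steinerOrig '' D ∪ steinerTerminals V) := ⟨_, Or.inr root_mem_steinerTerminals⟩
  have reach_orig {u : V} (hu : u ∈ D) : H.Reachable root ⟨_, orig_mem hu⟩ :=
    (show H.Adj root ⟨_, orig_mem hu⟩ from steinerAux_adj_root_orig G u).reachable
  refine (connected_iff_exists_forall_reachable H).2 ⟨root, ?_⟩
  rintro ⟨x, ⟨u, hu, rfl⟩ | hx⟩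
  · exact reach_orig hu
  rcases hx with ⟨⟨⟩, rfl⟩ | ⟨v, rfl⟩
  · rfl
  obtain ⟨u, hu, huv⟩ : ∃ u ∈ D, u = v ∨ G.Adj v u := by
    rcases hD v with hv | ⟨u, hu, huv⟩
    exacts [⟨v, hv, Or.inl rfl⟩, ⟨u, hu, Or.inr huv.symm⟩]
  have hadj : H.Adj ⟨_, orig_mem hu⟩ ⟨_, Or.inr (copy_mem_steinerTerminals v)⟩ :=
    ((steinerAux_adj_copy_iff G).2 ⟨u, rfl, huv⟩).symm
  exact (reach_orig hu).trans hadj.reachable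

lemma isDominatingSet_of_steinerAux_induce_connected {D : Set V}
    (h : ((steinerAux G).induce (steinerOrig '' D ∪ steinerTerminals V)).Connected) :
    G.IsDominatingSet D := by
  intro v
  let copy : ↑(steinerOrig '' D ∪ steinerTerminals V) := ⟨_, Or.inr (copy_mem_steinerTerminals v)⟩
  have : Nontrivial ↑(steinerOrig '' D ∪ steinerTerminals V) :=
    ⟨⟨copy, ⟨_, Or.inr root_mem_steinerTerminals⟩, Subtype.coe_ne_coe.1 (by simp [copy])⟩⟩
  obtain ⟨⟨b, hb⟩, hadj⟩ := h.preconnected.exists_adj_of_nontrivial copy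
  obtain ⟨u, rfl, huv⟩ := (steinerAux_adj_copy_iff G).1 hadj
  obtain ⟨w, hw, hwu⟩ := hb.resolve_right (steinerOrig_notMem_steinerTerminals u)
  obtain rfl := steinerOrig_injective hwu
  rcases huv with rfl | huv
  exacts [Or.inl hw, Or.inr ⟨w, hw, huv.symm⟩]

lemma steinerAux_induce_connected_iff (D : Set V) :
    ((steinerAux G).induce (steinerOrig '' D ∪ steinerTerminals V)).Connected ↔
      G.IsDominatingSet D :=
  ⟨isDominatingSet_of_steinerAux_induce_connected G,
    steinerAux_induce_connected_of_isDominatingSet G⟩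

end Steiner

theorem dominatingSet_iff_steiner_general {V : Type*} (G : SimpleGraph V) (k : ℕ) :
    (∃ D : Set V, D.ncard ≤ k ∧ ∀ v : V, v ∈ D ∨ ∃ u ∈ D, G.Adj u v) ↔
    (∃ S : Set (Unit ⊕ V ⊕ V), Disjoint S (steinerTerminals V) ∧ S.ncard ≤ k ∧
      ((steinerAux G).induce (S ∪ steinerTerminals V)).Connected) := by
  simp only [disjoint_steinerTerminals_iff, Set.exists_subset_range_and_iff,
    Set.ncard_image_of_injective _ steinerOrig_injective, steinerAux_induce_connected_iff]
  rfl

/-- `G` has a dominating set of size at most `k` iff there is a set `S` of at most `k`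
non-terminal vertices of `G'` such that `G'[S ∪ X]` is connected. -/
theorem dominatingSet_iff_steiner {V : Type*} [Fintype V] (G : SimpleGraph V) (k : ℕ) :
    (∃ D : Set V, D.ncard ≤ k ∧ ∀ v : V, v ∈ D ∨ ∃ u ∈ D, G.Adj u v) ↔
    (∃ S : Set (Unit ⊕ V ⊕ V), Disjoint S (steinerTerminals V) ∧ S.ncard ≤ k ∧
      ((steinerAux G).induce (S ∪ steinerTerminals V)).Connected) :=
  dominatingSet_iff_steiner_general G k
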